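/- arXiv:1310.1317 — 2 statements merged into one kernel-verified Lean document; each statement's English description precedes it below -/
import Mathlib

section
/- Let Ω ⊂ ℝ^N be a bounded domain with Lipschitz boundary, p ∈ (1,∞), q ∈ [1, p*), and let K be a measurable function such that K·ρ^a ∈ L^r(Ω) for some a ∈ [0, q−1] and r ∈ (1,∞) with 1/r + a/p + (q−a)/p* < 1, where ρ(x) = dist(x, ∂Ω). Then there exist b < p* and C > 0 such that ∫_Ω |K(x)| |u|^{q−1} |v| dx ≤ C ‖u‖^{q−1} ‖v‖_{L^b} for all u, v ∈ W₀^{1,p}(Ω), where ‖·‖ denotes the W₀^{1,p} norm ‖∇·‖_{L^p}. -/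
open MeasureTheory Real Filter Topology

/-- The `W^{1,p}_0` norm `‖∇u‖_{L^p(Ω)}`. -/
noncomputable def sobNorm {N : ℕ} (p : ℝ) (Ω : Set (EuclideanSpace ℝ (Fin N)))
    (u : EuclideanSpace ℝ (Fin N) → ℝ) : ℝ :=
  (eLpNorm (fun x => ‖fderiv ℝ u x‖) (ENNReal.ofReal p) (volume.restrict Ω)).toReal

/-- The `L^b(Ω)` norm. -/
noncomputable def lpNorm {N : ℕ} (b : ℝ) (Ω : Set (EuclideanSpace ℝ (Fin N)))
    (u : EuclideanSpace ℝ (Fin N) → ℝ) : ℝ :=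
  (eLpNorm u (ENNReal.ofReal b) (volume.restrict Ω)).toReal

/-- Test functions: smooth functions compactly supported in `Ω`, a dense subspace of
`W^{1,p}_0(Ω)`. -/
def TestFun {N : ℕ} (Ω : Set (EuclideanSpace ℝ (Fin N)))
    (u : EuclideanSpace ℝ (Fin N) → ℝ) : Prop :=
  ContDiff ℝ 1 u ∧ HasCompactSupport u ∧ tsupport u ⊆ Ω

/-- `ρ(x)`, the distance to the boundary `∂Ω`. -/
noncomputable def bdist {N : ℕ} (Ω : Set (EuclideanSpace ℝ (Fin N)))
    (x : EuclideanSpace ℝ (Fin N)) : ℝ :=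
  Metric.infDist x (frontier Ω)

/-- `1/p*` where `p* = Np/(N-p)` if `p < N` and `p* = ∞` if `p ≥ N`. -/
noncomputable def pStarInv (p : ℝ) (N : ℕ) : ℝ :=
  if p < N then (N - p) / (N * p) else 0


/-! On `Ω` one has `|K| |u|^(q-1) |v| = |K ρ^a| |u/ρ|^a |u|^(q-1-a) |v|`. Choosing `b` with
`1/r + a/p + (q-a)/b = 1`, Hölder's inequality with exponents `r`, `p/a`, `b/(q-1-a)`, `b`
bounds the integral by `‖Kρ^a‖_r ‖u/ρ‖_p^a ‖u‖_b^(q-1-a) ‖v‖_b`. The hypothesis on the exponents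
says precisely that `b < p*`, so the Hardy inequality and the Sobolev embedding (the
Gagliardo–Nirenberg–Sobolev inequality on the bounded set `Ω`) bound the middle factors by
powers of `‖∇u‖_p`. -/

open scoped ENNReal NNReal

section Holder

variable {α : Type*} [MeasurableSpace α] {μ : Measure α}

theorem eLpNorm_mul_le_ofReal_inv {f g : α → ℝ} (hf : AEStronglyMeasurable f μ)
    (hg : AEStronglyMeasurable g μ) {c d : ℝ} (hc : 0 ≤ c) (hd : 0 ≤ d) :
    eLpNorm (fun x => f x * g x) (ENNReal.ofReal (c + d))⁻¹ μ ≤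
      eLpNorm f (ENNReal.ofReal c)⁻¹ μ * eLpNorm g (ENNReal.ofReal d)⁻¹ μ := by
  have : ENNReal.HolderTriple (ENNReal.ofReal c)⁻¹ (ENNReal.ofReal d)⁻¹
      (ENNReal.ofReal (c + d))⁻¹ := ⟨by rw [inv_inv, inv_inv, inv_inv, ENNReal.ofReal_add hc hd]⟩
  exact eLpNorm_smul_le_mul_eLpNorm (φ := f) hg hf

theorem eLpNorm_norm_rpow_ofReal_div_inv_le (g : α → ℝ) {a e : ℝ} (ha : 0 ≤ a) (he : 0 < e) :
    eLpNorm (fun x => ‖g x‖ ^ a) (ENNReal.ofReal (a / e))⁻¹ μ ≤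
      eLpNorm g (ENNReal.ofReal e) μ ^ a := by
  rcases ha.eq_or_lt with rfl | ha
  · simpa using eLpNormEssSup_le_of_ae_bound (μ := μ) (C := 1) (.of_forall fun _ => by simp)
  · rw [eLpNorm_norm_rpow g ha, ← ENNReal.ofReal_inv_of_pos (by positivity),
      ← ENNReal.ofReal_mul (by positivity), inv_div, div_mul_cancel₀ _ ha.ne']

theorem integral_le_toReal_eLpNorm_one {f : α → ℝ} (hf : AEStronglyMeasurable f μ) :
    ∫ x, f x ∂μ ≤ (eLpNorm f 1 μ).toReal :=
  calc ∫ x, f x ∂μ ≤ ‖∫ x, f x ∂μ‖ := Real.le_norm_self _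
    _ ≤ ∫ x, ‖f x‖ ∂μ := norm_integral_le_integral_norm _
    _ = (eLpNorm f 1 μ).toReal := by
      rw [integral_norm_eq_lintegral_enorm hf, eLpNorm_one_eq_lintegral_enorm]

theorem integral_norm_mul_rpow_mul_rpow_mul_le {k w u v : α → ℝ} {r p b a c : ℝ}
    (hr : 0 < r) (hp : 0 < p) (hb : 0 < b) (ha : 0 ≤ a) (hc : 0 ≤ c)
    (hexp : 1 / r + a / p + (c + 1) / b = 1)
    (hk : MemLp k (ENNReal.ofReal r) μ) (hw : MemLp w (ENNReal.ofReal p) μ)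
    (hu : MemLp u (ENNReal.ofReal b) μ) (hv : MemLp v (ENNReal.ofReal b) μ) :
    ∫ x, ‖k x‖ * ‖w x‖ ^ a * ‖u x‖ ^ c * ‖v x‖ ∂μ ≤
      (eLpNorm k (ENNReal.ofReal r) μ).toReal * (eLpNorm w (ENNReal.ofReal p) μ).toReal ^ a *
        (eLpNorm u (ENNReal.ofReal b) μ).toReal ^ c * (eLpNorm v (ENNReal.ofReal b) μ).toReal := by
  have hk' : AEStronglyMeasurable (fun x => ‖k x‖) μ := hk.1.norm
  have hw' : AEStronglyMeasurable (fun x => ‖w x‖ ^ a) μ :=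
    (hw.1.norm.aemeasurable.pow_const a).aestronglyMeasurable
  have hu' : AEStronglyMeasurable (fun x => ‖u x‖ ^ c) μ :=
    (hu.1.norm.aemeasurable.pow_const c).aestronglyMeasurable
  have hv' : AEStronglyMeasurable (fun x => ‖v x‖) μ := hv.1.norm
  have hone : (1 : ℝ≥0∞) = (ENNReal.ofReal (1 / r + a / p + c / b + 1 / b))⁻¹ := by
    rw [add_assoc _ (c / b), ← add_div, hexp, ENNReal.ofReal_one, inv_one]
  have hholder : eLpNorm (fun x => ‖k x‖ * ‖w x‖ ^ a * ‖u x‖ ^ c * ‖v x‖) 1 μ ≤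
      eLpNorm k (ENNReal.ofReal r) μ * eLpNorm w (ENNReal.ofReal p) μ ^ a *
        eLpNorm u (ENNReal.ofReal b) μ ^ c * eLpNorm v (ENNReal.ofReal b) μ := by
    have hk_eq : eLpNorm (fun x => ‖k x‖) (ENNReal.ofReal (1 / r))⁻¹ μ =
        eLpNorm k (ENNReal.ofReal r) μ := by
      rw [eLpNorm_norm, one_div, ENNReal.ofReal_inv_of_pos hr, inv_inv]
    have hv_eq : eLpNorm (fun x => ‖v x‖) (ENNReal.ofReal (1 / b))⁻¹ μ =
        eLpNorm v (ENNReal.ofReal b) μ := by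
      rw [eLpNorm_norm, one_div, ENNReal.ofReal_inv_of_pos hb, inv_inv]
    rw [hone, ← hk_eq, ← hv_eq]
    refine (eLpNorm_mul_le_ofReal_inv ((hk'.mul hw').mul hu') hv' (by positivity)
      (by positivity)).trans ?_
    gcongr
    refine (eLpNorm_mul_le_ofReal_inv (hk'.mul hw') hu' (by positivity) (by positivity)).trans ?_
    gcongr
    · refine (eLpNorm_mul_le_ofReal_inv hk' hw' (by positivity) (by positivity)).trans ?_
      gcongr
      exact eLpNorm_norm_rpow_ofReal_div_inv_le w ha hp
    · exact eLpNorm_norm_rpow_ofReal_div_inv_le u hc hb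
  have hfin : eLpNorm k (ENNReal.ofReal r) μ * eLpNorm w (ENNReal.ofReal p) μ ^ a *
      eLpNorm u (ENNReal.ofReal b) μ ^ c * eLpNorm v (ENNReal.ofReal b) μ ≠ ∞ := by
    have := hk.2.ne; have := hw.2.ne; have := hu.2.ne; have := hv.2.ne
    finiteness
  calc _ ≤ (eLpNorm (fun x => ‖k x‖ * ‖w x‖ ^ a * ‖u x‖ ^ c * ‖v x‖) 1 μ).toReal :=
        integral_le_toReal_eLpNorm_one (((hk'.mul hw').mul hu').mul hv')
    _ ≤ _ := ENNReal.toReal_mono hfin hholder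
    _ = _ := by simp only [ENNReal.toReal_mul, ENNReal.toReal_rpow]

end Holder

theorem exists_pos_add_div_eq_one_and_lt_inv {x c t : ℝ} (hc : 0 < c) (ht : 0 ≤ t)
    (h : x + c * t < 1) : ∃ b > 0, x + c / b = 1 ∧ t < 1 / b := by
  have hx : 0 < 1 - x := by nlinarith
  refine ⟨c / (1 - x), by positivity, by field_simp; ring, ?_⟩
  rw [one_div_div, lt_div_iff₀ hc]
  linarith

theorem pStarInv_nonneg {p : ℝ} (hp : 0 < p) (N : ℕ) : 0 ≤ pStarInv p N := by
  unfold pStarInv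
  split_ifs with h
  · exact div_nonneg (by linarith) (by positivity)
  · rfl

theorem lt_pStar_of_pStarInv_lt {N : ℕ} {p b : ℝ} (hp : 0 < p) (hpN : p < N)
    (h : pStarInv p N < 1 / b) : b < N * p / (N - p) := by
  rw [pStarInv, if_pos hpN] at h
  have hN : (0 : ℝ) < N := hp.trans hpN
  have : 0 < (N - p) / (N * p) := div_pos (by linarith) (by positivity)
  simpa [one_div_div] using one_div_lt_one_div_of_lt this h

theorem Bornology.IsBounded.frontier_nonempty {E : Type*} [NormedAddCommGroup E]
    [NormedSpace ℝ E] [Nontrivial E] {s : Set E} (hb : Bornology.IsBounded s)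
    (hne : s.Nonempty) : (frontier s).Nonempty :=
  nonempty_frontier_iff.2 ⟨hne, fun h => NormedSpace.unbounded_univ ℝ E (h ▸ hb)⟩

theorem Continuous.div_of_ne_zero_on_tsupport {X : Type*} [TopologicalSpace X] {f g : X → ℝ}
    (hf : Continuous f) (hg : Continuous g) (h : ∀ x ∈ tsupport f, g x ≠ 0) :
    Continuous fun x => f x / g x := by
  refine continuous_iff_continuousAt.2 fun x => ?_
  by_cases hx : x ∈ tsupport f
  · exact hf.continuousAt.div hg.continuousAt (h x hx)
  · have hzero : (fun y => f y / g y) =ᶠ[𝓝 x] fun _ => 0 := by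
      filter_upwards [notMem_tsupport_iff_eventuallyEq.1 hx] with y hy
      simp [hy]
    exact continuousAt_const.congr hzero.symm

section Domain

variable {N : ℕ} {Ω : Set (EuclideanSpace ℝ (Fin N))}

theorem bdist_pos (hΩo : IsOpen Ω) (hfr : (frontier Ω).Nonempty)
    {x : EuclideanSpace ℝ (Fin N)} (hx : x ∈ Ω) : 0 < bdist Ω x :=
  (isClosed_frontier.notMem_iff_infDist_pos hfr).1 fun h => (hΩo.frontier_eq ▸ h).2 hx

theorem continuous_bdist : Continuous (bdist Ω) :=
  Metric.continuous_infDist_pt _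

namespace TestFun

variable {u : EuclideanSpace ℝ (Fin N) → ℝ}

theorem support_subset (hu : TestFun Ω u) : Function.support u ⊆ Ω :=
  (subset_tsupport u).trans hu.2.2

theorem memLp (hu : TestFun Ω u) (s : ℝ≥0∞) : MemLp u s (volume.restrict Ω) :=
  (hu.1.continuous.memLp_of_hasCompactSupport hu.2.1).restrict Ω

theorem memLp_fderiv (hu : TestFun Ω u) (s : ℝ≥0∞) :
    MemLp (fderiv ℝ u) s (volume.restrict Ω) :=
  ((hu.1.continuous_fderiv one_ne_zero).memLp_of_hasCompactSupport
    (hu.2.1.fderiv ℝ)).restrict Ω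

theorem memLp_div_bdist (hu : TestFun Ω u) (hΩo : IsOpen Ω) (hfr : (frontier Ω).Nonempty)
    (s : ℝ≥0∞) : MemLp (fun x => u x / bdist Ω x) s (volume.restrict Ω) :=
  ((hu.1.continuous.div_of_ne_zero_on_tsupport continuous_bdist
      fun x hx => (bdist_pos hΩo hfr (hu.2.2 hx)).ne').memLp_of_hasCompactSupport
    (hu.2.1.mono fun x hx => by simp_all)).restrict Ω

end TestFun

end Domain

theorem exists_gns_exponent {N : ℕ} (hN : 2 ≤ N) {p s : ℝ} (hp : 1 < p) (hs : 0 < s)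
    (h : pStarInv p N < 1 / s) :
    ∃ P : ℝ, 1 ≤ P ∧ P < N ∧ P ≤ p ∧ P⁻¹ - (N : ℝ)⁻¹ ≤ s⁻¹ := by
  have hN' : (2 : ℝ) ≤ N := by exact_mod_cast hN
  by_cases hpN : p < N
  · refine ⟨p, hp.le, hpN, le_rfl, ?_⟩
    rw [pStarInv, if_pos hpN] at h
    have : (N - p) / (N * p) = p⁻¹ - (N : ℝ)⁻¹ := by field_simp
    rw [← this, ← one_div]
    exact h.le
  · -- below `N`, but close enough to `N` that the Sobolev exponent of `P` exceeds `s`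
    set x : ℝ := N * s / (N + s)
    have hxN : x < N := by
      rw [div_lt_iff₀ (by positivity)]
      nlinarith
    refine ⟨max 1 x, le_max_left 1 x, max_lt (by linarith) hxN,
      (max_lt (by linarith) hxN).le.trans (not_lt.1 hpN), ?_⟩
    calc (max 1 x)⁻¹ - (N : ℝ)⁻¹ ≤ x⁻¹ - (N : ℝ)⁻¹ := by
          gcongr
          exact le_max_right 1 x
      _ = s⁻¹ := by rw [inv_div]; field_simp; ring

section Sobolev

variable {N : ℕ} {Ω : Set (EuclideanSpace ℝ (Fin N))} {p s : ℝ}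

theorem exists_eLpNorm_le_mul_eLpNorm_fderiv (hN : 2 ≤ N) (hΩb : Bornology.IsBounded Ω)
    (hp : 1 < p) (hs : 0 < s) (h : pStarInv p N < 1 / s) :
    ∃ C : ℝ≥0, ∀ u, TestFun Ω u →
      eLpNorm u (ENNReal.ofReal s) (volume.restrict Ω) ≤
        C * eLpNorm (fderiv ℝ u) (ENNReal.ofReal p) (volume.restrict Ω) := by
  obtain ⟨P, hP1, hPN, hPp, hPs⟩ := exists_gns_exponent hN hp hs h
  lift P to ℝ≥0 using zero_le_one.trans hP1
  have hfinrank : Module.finrank ℝ (EuclideanSpace ℝ (Fin N)) = N := finrank_euclideanSpace_fin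
  set w := volume.restrict Ω Set.univ ^ (1 / (P : ℝ≥0∞).toReal - 1 / (ENNReal.ofReal p).toReal)
  have hw : w ≠ ∞ := by
    refine ENNReal.rpow_ne_top_of_nonneg ?_ (by simpa using hΩb.measure_lt_top.ne)
    rw [ENNReal.coe_toReal, ENNReal.toReal_ofReal (by linarith), sub_nonneg]
    exact one_div_le_one_div_of_le (by positivity) hPp
  set C := eLpNormLESNormFDerivOfLeConst ℝ volume Ω P s.toNNReal
  refine ⟨C * w.toNNReal, fun u hu => ?_⟩
  have hsupp_fderiv : Function.support (fderiv ℝ u) ⊆ Ω := (support_fderiv_subset ℝ).trans hu.2.2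
  calc eLpNorm u (ENNReal.ofReal s) (volume.restrict Ω)
      = eLpNorm u s.toNNReal volume := eLpNorm_restrict_eq_of_support_subset hu.support_subset
    _ ≤ C * eLpNorm (fderiv ℝ u) P volume :=
        eLpNorm_le_eLpNorm_fderiv_of_le volume hu.1 hu.support_subset (mod_cast hP1)
          (by rw [hfinrank]; exact_mod_cast hPN)
          (by rw [hfinrank, Real.coe_toNNReal _ hs.le]; exact hPs) hΩb
    _ = C * eLpNorm (fderiv ℝ u) P (volume.restrict Ω) := by
        rw [eLpNorm_restrict_eq_of_support_subset (f := fderiv ℝ u) hsupp_fderiv]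
    _ ≤ C * (eLpNorm (fderiv ℝ u) (ENNReal.ofReal p) (volume.restrict Ω) * w) := by
        gcongr
        refine eLpNorm_le_eLpNorm_mul_rpow_measure_univ ?_
          (hu.1.continuous_fderiv one_ne_zero).aestronglyMeasurable
        rw [← ENNReal.ofReal_coe_nnreal]
        exact ENNReal.ofReal_le_ofReal hPp
    _ = _ := by rw [ENNReal.coe_mul, ENNReal.coe_toNNReal hw]; ring

theorem exists_lpNorm_le_mul_sobNorm (hN : 2 ≤ N) (hΩb : Bornology.IsBounded Ω)
    (hp : 1 < p) (hs : 0 < s) (h : pStarInv p N < 1 / s) :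
    ∃ C > 0, ∀ u, TestFun Ω u → lpNorm s Ω u ≤ C * sobNorm p Ω u := by
  obtain ⟨C, hC⟩ := exists_eLpNorm_le_mul_eLpNorm_fderiv hN hΩb hp hs h
  refine ⟨C + 1, by positivity, fun u hu => ?_⟩
  have hfin := (hu.memLp_fderiv (ENNReal.ofReal p)).eLpNorm_ne_top
  calc lpNorm s Ω u ≤ C * sobNorm p Ω u := by
        rw [_root_.lpNorm, sobNorm, eLpNorm_norm, ← ENNReal.coe_toReal, ← ENNReal.toReal_mul]
        exact ENNReal.toReal_mono (by finiteness) (hC u hu)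
    _ ≤ (C + 1) * sobNorm p Ω u := by
        gcongr
        · exact ENNReal.toReal_nonneg
        · linarith

end Sobolev

theorem abs_mul_abs_rpow_add_mul_abs_eq {k ρ u v a c : ℝ} (hρ : 0 < ρ) (ha : 0 ≤ a)
    (hc : 0 ≤ c) :
    |k| * |u| ^ (a + c) * |v| = ‖k * ρ ^ a‖ * ‖u / ρ‖ ^ a * ‖u‖ ^ c * ‖v‖ := by
  have hρa : 0 < ρ ^ a := Real.rpow_pos_of_pos hρ a
  simp only [Real.norm_eq_abs, abs_mul, abs_div, abs_of_pos hρ, abs_of_pos hρa,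
    Real.div_rpow (abs_nonneg u) hρ.le, Real.rpow_add_of_nonneg (abs_nonneg u) ha hc]
  field_simp

theorem stmt_0_general {N : ℕ} (hN : 2 ≤ N) (Ω : Set (EuclideanSpace ℝ (Fin N)))
    (hΩo : IsOpen Ω) (hΩb : Bornology.IsBounded Ω) (hΩne : Ω.Nonempty)
    (p q a r : ℝ) (hp : 1 < p)
    (ha0 : 0 ≤ a) (ha1 : a ≤ q - 1) (hr : 1 < r)
    (K : EuclideanSpace ℝ (Fin N) → ℝ)
    (hKr : MemLp (fun x => K x * bdist Ω x ^ a) (ENNReal.ofReal r) (volume.restrict Ω))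
    (hsub : 1 / r + a / p + (q - a) * pStarInv p N < 1)
    -- the Hardy inequality, valid since `Ω` has Lipschitz boundary
    (hHardy : ∃ CH > 0, ∀ u, TestFun Ω u →
      lpNorm p Ω (fun x => u x / bdist Ω x) ≤ CH * sobNorm p Ω u) :
    ∃ b C : ℝ, (p < N → b < N * p / (N - p)) ∧ 0 < C ∧
      ∀ u v, TestFun Ω u → TestFun Ω v →
        ∫ x in Ω, |K x| * |u x| ^ (q - 1) * |v x| ≤
          C * sobNorm p Ω u ^ (q - 1) * lpNorm b Ω v := by
  have hp0 : 0 < p := by linarith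
  have hc : 0 ≤ q - 1 - a := by linarith
  have : Nonempty (Fin N) := ⟨⟨0, by omega⟩⟩
  have hfr : (frontier Ω).Nonempty := hΩb.frontier_nonempty hΩne
  obtain ⟨b, hb, hexp, hbp⟩ :=
    exists_pos_add_div_eq_one_and_lt_inv (by linarith) (pStarInv_nonneg hp0 N) hsub
  obtain ⟨CS, hCS, hSobolev⟩ := exists_lpNorm_le_mul_sobNorm hN hΩb hp hb hbp
  obtain ⟨CH, hCH, hHardy⟩ := hHardy
  set A := (eLpNorm (fun x => K x * bdist Ω x ^ a) (ENNReal.ofReal r) (volume.restrict Ω)).toReal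
  refine ⟨b, (A + 1) * CH ^ a * CS ^ (q - 1 - a), fun hpN => lt_pStar_of_pStarInv_lt hp0 hpN hbp,
    by positivity, fun u v hu hv => ?_⟩
  set S := sobNorm p Ω u
  have hS : 0 ≤ S := ENNReal.toReal_nonneg
  calc ∫ x in Ω, |K x| * |u x| ^ (q - 1) * |v x|
      = ∫ x in Ω, ‖K x * bdist Ω x ^ a‖ * ‖u x / bdist Ω x‖ ^ a * ‖u x‖ ^ (q - 1 - a) * ‖v x‖ :=
        setIntegral_congr_fun hΩo.measurableSet fun x hx => by
          rw [← abs_mul_abs_rpow_add_mul_abs_eq (bdist_pos hΩo hfr hx) ha0 hc, add_sub_cancel]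
    _ ≤ A * lpNorm p Ω (fun x => u x / bdist Ω x) ^ a * lpNorm b Ω u ^ (q - 1 - a) *
          lpNorm b Ω v :=
        integral_norm_mul_rpow_mul_rpow_mul_le (by linarith) hp0 hb ha0 hc
          (by linear_combination hexp) hKr
          (hu.memLp_div_bdist hΩo hfr _) (hu.memLp _) (hv.memLp _)
    _ ≤ (A + 1) * (CH * S) ^ a * (CS * S) ^ (q - 1 - a) * lpNorm b Ω v := by
        have hH : 0 ≤ lpNorm p Ω (fun x => u x / bdist Ω x) := ENNReal.toReal_nonneg
        have hU : 0 ≤ lpNorm b Ω u := ENNReal.toReal_nonneg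
        have hV : 0 ≤ lpNorm b Ω v := ENNReal.toReal_nonneg
        gcongr
        · linarith
        · exact hHardy u hu
        · exact hSobolev u hu
    _ = (A + 1) * CH ^ a * CS ^ (q - 1 - a) * S ^ (q - 1) * lpNorm b Ω v := by
        rw [Real.mul_rpow hCH.le hS, Real.mul_rpow hCS.le hS, ← add_sub_cancel a (q - 1),
          Real.rpow_add_of_nonneg hS ha0 hc, add_sub_cancel]
        ring

theorem stmt_0 {N : ℕ} (hN : 2 ≤ N) (Ω : Set (EuclideanSpace ℝ (Fin N)))
    (hΩo : IsOpen Ω) (hΩb : Bornology.IsBounded Ω) (hΩne : Ω.Nonempty)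
    (p q a r : ℝ) (hp : 1 < p) (hq1 : 1 ≤ q)
    (hq : p < N → q < N * p / (N - p))
    (ha0 : 0 ≤ a) (ha1 : a ≤ q - 1) (hr : 1 < r)
    (K : EuclideanSpace ℝ (Fin N) → ℝ) (hKmeas : Measurable K)
    (hKr : MemLp (fun x => K x * bdist Ω x ^ a) (ENNReal.ofReal r) (volume.restrict Ω))
    (hsub : 1 / r + a / p + (q - a) * pStarInv p N < 1)
    -- the Hardy inequality, valid since `Ω` has Lipschitz boundary
    (hHardy : ∃ CH > 0, ∀ u, TestFun Ω u →
      lpNorm p Ω (fun x => u x / bdist Ω x) ≤ CH * sobNorm p Ω u) :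
    ∃ b C : ℝ, (p < N → b < N * p / (N - p)) ∧ 0 < C ∧
      ∀ u v, TestFun Ω u → TestFun Ω v →
        ∫ x in Ω, |K x| * |u x| ^ (q - 1) * |v x| ≤
          C * sobNorm p Ω u ^ (q - 1) * lpNorm b Ω v :=
  stmt_0_general hN Ω hΩo hΩb hΩne p q a r hp ha0 ha1 hr K hKr hsub hHardy
end

section
/- Under the hypotheses of the weight class: p ≤ N, q ∈ [1, p*), and K measurable with K·ρ^a ∈ L^r(Ω) for some a ∈ [0, q−1], r ∈ (1,∞) satisfying 1/r + a/p + (q−1−a)/p* < p/N, there exists s > N/p and C > 0 such that for every u ∈ W₀^{1,p}(Ω) the function K(x)|u(x)|^{q−1} belongs to L^s(Ω) and ‖K·|u|^{q−1}‖_{L^s} ≤ C‖u‖^{q−1}. -/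
open MeasureTheory Real Filter Topology

/-!
Write `d = q - 1 - a`. On `Ω` one has `K |u|^(q-1) = (K ρ^a) |u/ρ|^a |u|^d`, so Hölder's
inequality with three exponents, `1/s = 1/r + a/p + d/b`, gives
`‖K |u|^(q-1)‖_s ≤ ‖K ρ^a‖_r ‖u/ρ‖_p^a ‖u‖_b^d`. The Hardy inequality bounds `‖u/ρ‖_p`, and the
Sobolev embedding bounds `‖u‖_b`, by multiples of `‖∇u‖_p` as soon as `b < p*`. The hypothesis
`1/r + a/p + d/p* < p/N` is strict, so `b` can be taken slightly below `p*` with `1/s` still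
below `p/N`, that is `s > N/p`.
-/

open scoped ENNReal NNReal

section Holder

variable {α E : Type*} {m : MeasurableSpace α} {μ : Measure α} [NormedAddCommGroup E]

-- Only an inequality: for `t = 0` the exponent `p / 0` is `∞` and the left side may be below `1`.
theorem eLpNorm_norm_rpow_le (f : α → E) (p : ℝ≥0∞) {t : ℝ} (ht : 0 ≤ t) :
    eLpNorm (fun x => ‖f x‖ ^ t) (p / ENNReal.ofReal t) μ ≤ eLpNorm f p μ ^ t := by
  rcases ht.eq_or_lt with rfl | ht
  · simpa using eLpNorm_le_of_ae_bound (μ := μ) (p := p / 0)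
      (Eventually.of_forall fun x => (by simp : ‖‖f x‖ ^ (0 : ℝ)‖ ≤ 1))
  · rw [eLpNorm_norm_rpow f ht, ENNReal.div_mul_cancel (by simpa using ht) ENNReal.ofReal_ne_top]

theorem eLpNorm_mul_le_of_holderTriple {f g : α → ℝ} (hf : AEStronglyMeasurable f μ)
    (hg : AEStronglyMeasurable g μ) {p q r : ℝ≥0∞} [ENNReal.HolderTriple p q r] :
    eLpNorm (fun x => f x * g x) r μ ≤ eLpNorm f p μ * eLpNorm g q μ := by
  simpa using eLpNorm_le_eLpNorm_mul_eLpNorm'_of_norm (p := p) (q := q) hf hg (· * ·) 1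
    (Eventually.of_forall fun x => by simp [norm_mul])

theorem eLpNorm_mul_mul_le {f g h : α → ℝ} (hf : AEStronglyMeasurable f μ)
    (hg : AEStronglyMeasurable g μ) (hh : AEStronglyMeasurable h μ) {p q r s : ℝ≥0∞}
    (hs : s⁻¹ = p⁻¹ + q⁻¹ + r⁻¹) :
    eLpNorm (fun x => f x * (g x * h x)) s μ ≤
      eLpNorm f p μ * (eLpNorm g q μ * eLpNorm h r μ) := by
  have := ENNReal.HolderTriple.of q r
  have : ENNReal.HolderTriple p (q⁻¹ + r⁻¹)⁻¹ s := ⟨by rw [inv_inv, hs, add_assoc]⟩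
  calc eLpNorm (fun x => f x * (g x * h x)) s μ
      ≤ eLpNorm f p μ * eLpNorm (fun x => g x * h x) (q⁻¹ + r⁻¹)⁻¹ μ :=
        eLpNorm_mul_le_of_holderTriple hf (hg.mul hh)
    _ ≤ _ := by gcongr; exact eLpNorm_mul_le_of_holderTriple hg hh

theorem MemLp.mul_norm_rpow_mul_norm_rpow {f : α → ℝ} {g h : α → E} {r p b s a d : ℝ}
    (hf : MemLp f (ENNReal.ofReal r) μ) (hg : MemLp g (ENNReal.ofReal p) μ)
    (hh : MemLp h (ENNReal.ofReal b) μ) (hr : 0 < r) (hp : 0 < p) (hb : 0 < b)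
    (ha : 0 ≤ a) (hd : 0 ≤ d) (hexp : 1 / s = 1 / r + a / p + d / b) :
    MemLp (fun x => f x * (‖g x‖ ^ a * ‖h x‖ ^ d)) (ENNReal.ofReal s) μ ∧
      (eLpNorm (fun x => f x * (‖g x‖ ^ a * ‖h x‖ ^ d)) (ENNReal.ofReal s) μ).toReal ≤
        (eLpNorm f (ENNReal.ofReal r) μ).toReal *
          ((eLpNorm g (ENNReal.ofReal p) μ).toReal ^ a *
            (eLpNorm h (ENNReal.ofReal b) μ).toReal ^ d) := by
  have hs : 0 < s := one_div_pos.mp (hexp ▸ by positivity)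
  have hexp' : (ENNReal.ofReal s)⁻¹ = (ENNReal.ofReal r)⁻¹ +
      (ENNReal.ofReal p / ENNReal.ofReal a)⁻¹ + (ENNReal.ofReal b / ENNReal.ofReal d)⁻¹ := by
    rw [ENNReal.inv_div (.inl ENNReal.ofReal_ne_top) (.inr (by simpa using hp)),
      ENNReal.inv_div (.inl ENNReal.ofReal_ne_top) (.inr (by simpa using hb)),
      ← ENNReal.ofReal_div_of_pos hp, ← ENNReal.ofReal_div_of_pos hb,
      ← ENNReal.ofReal_inv_of_pos hs, ← ENNReal.ofReal_inv_of_pos hr,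
      ← ENNReal.ofReal_add (by positivity) (by positivity),
      ← ENNReal.ofReal_add (by positivity) (by positivity), ← one_div, ← one_div, hexp]
  have hga : AEStronglyMeasurable (fun x => ‖g x‖ ^ a) μ :=
    (hg.1.norm.aemeasurable.pow_const a).aestronglyMeasurable
  have hhd : AEStronglyMeasurable (fun x => ‖h x‖ ^ d) μ :=
    (hh.1.norm.aemeasurable.pow_const d).aestronglyMeasurable
  have hle : eLpNorm (fun x => f x * (‖g x‖ ^ a * ‖h x‖ ^ d)) (ENNReal.ofReal s) μ ≤
      eLpNorm f (ENNReal.ofReal r) μ * (eLpNorm g (ENNReal.ofReal p) μ ^ a *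
        eLpNorm h (ENNReal.ofReal b) μ ^ d) := by
    grw [eLpNorm_mul_mul_le hf.1 hga hhd hexp', eLpNorm_norm_rpow_le g _ ha,
      eLpNorm_norm_rpow_le h _ hd]
  have hfin : eLpNorm f (ENNReal.ofReal r) μ * (eLpNorm g (ENNReal.ofReal p) μ ^ a *
      eLpNorm h (ENNReal.ofReal b) μ ^ d) ≠ ⊤ := by
    have := hf.2.ne; have := hg.2.ne; have := hh.2.ne
    finiteness
  refine ⟨⟨hf.1.mul (hga.mul hhd), hle.trans_lt hfin.lt_top⟩, ?_⟩
  simpa [ENNReal.toReal_mul, ENNReal.toReal_rpow] using ENNReal.toReal_mono hfin hle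

end Holder

section Sobolev

theorem exists_gns_exponent_s1 {p b n : ℝ} (hp : 1 ≤ p) (hn : 1 < n) (hb : 0 < b)
    (hpb : 1 / p - 1 / n < 1 / b) : ∃ p₀, 1 ≤ p₀ ∧ p₀ ≤ p ∧ p₀ < n ∧ p₀⁻¹ - n⁻¹ ≤ b⁻¹ := by
  refine ⟨(min 1 (b⁻¹ + n⁻¹))⁻¹, one_le_inv₀ (by positivity) |>.mpr (min_le_left _ _), ?_, ?_, ?_⟩
  · rw [inv_le_comm₀ (by positivity) (by linarith), le_min_iff]
    exact ⟨inv_le_one_of_one_le₀ hp, by simp only [one_div] at hpb; linarith⟩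
  · rw [inv_lt_comm₀ (by positivity) (by linarith), lt_min_iff]
    exact ⟨inv_lt_one_of_one_lt₀ hn, lt_add_of_pos_left _ (inv_pos.mpr hb)⟩
  · rw [inv_inv]
    linarith [min_le_right 1 (b⁻¹ + n⁻¹)]

variable {E F : Type*} [NormedAddCommGroup E] [NormedSpace ℝ E] [FiniteDimensional ℝ E]
  [MeasurableSpace E] [BorelSpace E] [NormedAddCommGroup F] [NormedSpace ℝ F]
  [FiniteDimensional ℝ F]

/-- Gagliardo–Nirenberg–Sobolev for an exponent `p₀ ≤ p` below the dimension, followed by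
Hölder's inequality on the bounded set `s` to pass from `p₀` to `p`. -/
theorem exists_eLpNorm_le_eLpNorm_fderiv_of_isBounded (μ : Measure E) [μ.IsAddHaarMeasure]
    {s : Set E} (hs : Bornology.IsBounded s) {p b : ℝ} (hp : 1 ≤ p)
    (hn : 1 < Module.finrank ℝ E) (hb : 0 < b) (hpb : 1 / p - 1 / Module.finrank ℝ E < 1 / b) :
    ∃ C : ℝ≥0, ∀ u : E → F, ContDiff ℝ 1 u → tsupport u ⊆ s →
      eLpNorm u (ENNReal.ofReal b) (μ.restrict s) ≤
        C * eLpNorm (fderiv ℝ u) (ENNReal.ofReal p) (μ.restrict s) := by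
  obtain ⟨p₀, hp₀, hp₀p, hp₀n, hp₀b⟩ := exists_gns_exponent_s1 hp (by exact_mod_cast hn) hb hpb
  have hp₀0 : 0 ≤ p₀ := by linarith
  have hV : μ s ^ (1 / p₀ - 1 / p) ≠ ⊤ := ENNReal.rpow_ne_top_of_nonneg
    (sub_nonneg.mpr (one_div_le_one_div_of_le (by linarith) hp₀p)) hs.measure_lt_top.ne
  set C₀ := eLpNormLESNormFDerivOfLeConst F μ s p₀.toNNReal b.toNNReal
  refine ⟨C₀ * (μ s ^ (1 / p₀ - 1 / p)).toNNReal, fun u hu hus => ?_⟩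
  have hus' : u.support ⊆ s := (subset_tsupport u).trans hus
  have hfus : (fderiv ℝ u).support ⊆ s := (support_fderiv_subset ℝ).trans hus
  have hGNS := eLpNorm_le_eLpNorm_fderiv_of_le μ hu hus' (p := p₀.toNNReal) (q := b.toNNReal)
    (by rw [← NNReal.coe_le_coe, Real.coe_toNNReal _ hp₀0]; exact hp₀)
    (by rw [← NNReal.coe_lt_coe, Real.coe_toNNReal _ hp₀0]; exact hp₀n)
    (by rw [NNReal.coe_inv, Real.coe_toNNReal _ hp₀0, Real.coe_toNNReal _ hb.le]; exact hp₀b) hs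
  have hHolder := eLpNorm_le_eLpNorm_mul_rpow_measure_univ (μ := μ.restrict s)
    (ENNReal.ofReal_le_ofReal hp₀p) (hu.continuous_fderiv one_ne_zero).aestronglyMeasurable
  calc eLpNorm u (ENNReal.ofReal b) (μ.restrict s) = eLpNorm u b.toNNReal μ :=
        eLpNorm_restrict_eq_of_support_subset hus'
    _ ≤ _ := hGNS
    _ = C₀ * eLpNorm (fderiv ℝ u) (ENNReal.ofReal p₀) (μ.restrict s) := by
        rw [eLpNorm_restrict_eq_of_support_subset (ε := E →L[ℝ] F) hfus]; rfl
    _ ≤ C₀ * (eLpNorm (fderiv ℝ u) (ENNReal.ofReal p) (μ.restrict s) * μ s ^ (1 / p₀ - 1 / p)) := by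
        gcongr
        simpa [ENNReal.toReal_ofReal hp₀0, ENNReal.toReal_ofReal (hp₀0.trans hp₀p)] using hHolder
    _ = _ := by rw [ENNReal.coe_mul, ENNReal.coe_toNNReal hV]; ring

end Sobolev

theorem pStarInv_eq {p : ℝ} {N : ℕ} (hp : 0 < p) (hpN : p ≤ N) :
    pStarInv p N = 1 / p - 1 / N := by
  have hN : (0 : ℝ) < N := hp.trans_le hpN
  unfold pStarInv
  split_ifs with h
  · field_simp
  · rw [le_antisymm hpN (not_lt.mp h), sub_self]

theorem exists_holder_exponents {p r a d n : ℝ} (hp : 0 < p) (hpn : p ≤ n) (hr : 0 < r)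
    (ha : 0 ≤ a) (hd : 0 ≤ d) (h : 1 / r + a / p + d * (1 / p - 1 / n) < p / n) :
    ∃ s b : ℝ, n / p < s ∧ 0 < b ∧ 1 / p - 1 / n < 1 / b ∧ 1 / s = 1 / r + a / p + d / b := by
  set σ := 1 / p - 1 / n
  have hσ : 0 ≤ σ := sub_nonneg.2 (one_div_le_one_div_of_le hp hpn)
  set gap := p / n - (1 / r + a / p + d * σ)
  have hgap : 0 < gap := sub_pos.2 h
  set t := σ + gap / (d + 1)
  have hdt : d * t < d * σ + gap := by
    have : d * t = d * σ + gap * (d / (d + 1)) := by simp only [t]; field_simp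
    rw [this]
    gcongr
    exact mul_lt_of_lt_one_right hgap ((div_lt_one (by linarith)).2 (by linarith))
  have hD : 0 < 1 / r + a / p + d * t := by positivity
  refine ⟨1 / (1 / r + a / p + d * t), 1 / t, ?_, by positivity, ?_, ?_⟩
  · rw [lt_one_div (div_pos (hp.trans_le hpn) hp) hD, one_div_div]
    linarith
  · rw [one_div_one_div]
    exact lt_add_of_pos_right _ (by positivity)
  · rw [one_div_one_div, div_div_eq_mul_div, div_one]

theorem mul_abs_rpow_add_eq {k v ρ a d : ℝ} (hρ : 0 < ρ) (ha : 0 ≤ a) (hd : 0 ≤ d) :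
    k * |v| ^ (a + d) = k * ρ ^ a * (‖v / ρ‖ ^ a * ‖v‖ ^ d) := by
  have : ρ ^ a ≠ 0 := (rpow_pos_of_pos hρ a).ne'
  rw [Real.norm_eq_abs, Real.norm_eq_abs, abs_div, abs_of_pos hρ, div_rpow (abs_nonneg _) hρ.le,
    rpow_add_of_nonneg (abs_nonneg _) ha hd]
  field_simp

theorem rpow_mul_rpow_le_of_le_mul {x y z c₁ c₂ a d : ℝ} (hx : 0 ≤ x) (hy : 0 ≤ y) (hz : 0 ≤ z)
    (hc₁ : 0 ≤ c₁) (hc₂ : 0 ≤ c₂) (ha : 0 ≤ a) (hd : 0 ≤ d) (hxz : x ≤ c₁ * z)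
    (hyz : y ≤ c₂ * z) : x ^ a * y ^ d ≤ c₁ ^ a * c₂ ^ d * z ^ (a + d) :=
  calc x ^ a * y ^ d ≤ (c₁ * z) ^ a * (c₂ * z) ^ d := by gcongr
    _ = c₁ ^ a * c₂ ^ d * z ^ (a + d) := by
      rw [mul_rpow hc₁ hz, mul_rpow hc₂ hz, rpow_add_of_nonneg hz ha hd]
      ring

theorem infDist_frontier_pos {E : Type*} [NormedAddCommGroup E] [NormedSpace ℝ E] [Nontrivial E]
    {Ω : Set E} (hΩo : IsOpen Ω) (hΩb : Bornology.IsBounded Ω) {x : E} (hx : x ∈ Ω) :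
    0 < Metric.infDist x (frontier Ω) := by
  have hfr : (frontier Ω).Nonempty := nonempty_frontier_iff.mpr
    ⟨⟨x, hx⟩, fun h => NormedSpace.unbounded_univ ℝ E (h ▸ hΩb)⟩
  refine (isClosed_frontier.notMem_iff_infDist_pos hfr).mp fun hxf => ?_
  exact (hΩo.frontier_eq ▸ hxf).2 hx

section TestFun

variable {N : ℕ} {Ω : Set (EuclideanSpace ℝ (Fin N))} {u : EuclideanSpace ℝ (Fin N) → ℝ}

theorem sobNorm_eq (p : ℝ) :
    sobNorm p Ω u = (eLpNorm (fderiv ℝ u) (ENNReal.ofReal p) (volume.restrict Ω)).toReal := by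
  rw [sobNorm, eLpNorm_norm]

theorem TestFun.memLp_s1 (hu : TestFun Ω u) (P : ℝ≥0∞) : MemLp u P (volume.restrict Ω) :=
  (hu.1.continuous.memLp_of_hasCompactSupport hu.2.1).restrict Ω

theorem TestFun.eLpNorm_fderiv_ne_top (hu : TestFun Ω u) (P : ℝ≥0∞) :
    eLpNorm (fderiv ℝ u) P (volume.restrict Ω) ≠ ⊤ :=
  (((hu.1.continuous_fderiv one_ne_zero).memLp_of_hasCompactSupport
    (hu.2.1.fderiv (𝕜 := ℝ))).restrict Ω).2.ne

theorem TestFun.memLp_div_bdist_s1 [NeZero N] (hΩo : IsOpen Ω) (hΩb : Bornology.IsBounded Ω)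
    (hu : TestFun Ω u) (P : ℝ≥0∞) :
    MemLp (fun x => u x / bdist Ω x) P (volume.restrict Ω) := by
  refine ((continuous_iff_continuousAt.mpr fun x => ?_).memLp_of_hasCompactSupport
    (hu.2.1.mono fun x hx => by simpa using left_ne_zero_of_mul hx)).restrict Ω
  by_cases hx : x ∈ tsupport u
  · exact hu.1.continuous.continuousAt.div (Metric.continuous_infDist_pt _).continuousAt
      (infDist_frontier_pos hΩo hΩb (hu.2.2 hx)).ne'
  · exact (continuousAt_const (y := (0 : ℝ))).congr
      ((notMem_tsupport_iff_eventuallyEq.mp hx).mono fun y hy => by simp [show u y = 0 from hy])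

theorem mul_abs_rpow_add_ae_eq [NeZero N] (hΩo : IsOpen Ω) (hΩb : Bornology.IsBounded Ω)
    (K : EuclideanSpace ℝ (Fin N) → ℝ) {a d : ℝ} (ha : 0 ≤ a) (hd : 0 ≤ d) :
    (fun x => K x * |u x| ^ (a + d)) =ᵐ[volume.restrict Ω]
      fun x => K x * bdist Ω x ^ a * (‖u x / bdist Ω x‖ ^ a * ‖u x‖ ^ d) := by
  filter_upwards [ae_restrict_mem hΩo.measurableSet] with x hx
  exact mul_abs_rpow_add_eq (infDist_frontier_pos hΩo hΩb hx) ha hd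

theorem exists_lpNorm_le_sobNorm (hΩb : Bornology.IsBounded Ω) {p b : ℝ} (hp : 1 ≤ p)
    (hN : 1 < N) (hb : 0 < b) (hpb : 1 / p - 1 / N < 1 / b) :
    ∃ C : ℝ≥0, ∀ u, TestFun Ω u → lpNorm b Ω u ≤ C * sobNorm p Ω u := by
  obtain ⟨C, hC⟩ := exists_eLpNorm_le_eLpNorm_fderiv_of_isBounded (F := ℝ) volume hΩb hp
    (by simpa using hN) hb (by simpa using hpb)
  refine ⟨C, fun u hu => ?_⟩
  rw [_root_.lpNorm, sobNorm_eq, ← ENNReal.coe_toReal, ← ENNReal.toReal_mul]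
  exact ENNReal.toReal_mono (ENNReal.mul_ne_top ENNReal.coe_ne_top
    (hu.eLpNorm_fderiv_ne_top _)) (hC u hu.1 hu.2.2)

end TestFun

theorem stmt_1_general {N : ℕ} (Ω : Set (EuclideanSpace ℝ (Fin N)))
    (hΩo : IsOpen Ω) (hΩb : Bornology.IsBounded Ω)
    (p q a r : ℝ) (hp : 1 < p) (hpN : p ≤ N)
    (ha0 : 0 ≤ a) (ha1 : a ≤ q - 1) (hr : 1 < r)
    (K : EuclideanSpace ℝ (Fin N) → ℝ)
    (hKr : MemLp (fun x => K x * bdist Ω x ^ a) (ENNReal.ofReal r) (volume.restrict Ω))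
    (hsub : 1 / r + a / p + (q - 1 - a) * pStarInv p N < p / N)
    -- the Hardy inequality, valid since `Ω` has Lipschitz boundary
    (hHardy : ∃ CH > 0, ∀ u, TestFun Ω u →
      lpNorm p Ω (fun x => u x / bdist Ω x) ≤ CH * sobNorm p Ω u) :
    ∃ s C : ℝ, N / p < s ∧ 0 < C ∧
      ∀ u, TestFun Ω u →
        MemLp (fun x => K x * |u x| ^ (q - 1)) (ENNReal.ofReal s) (volume.restrict Ω) ∧
        lpNorm s Ω (fun x => K x * |u x| ^ (q - 1)) ≤ C * sobNorm p Ω u ^ (q - 1) := by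
  obtain ⟨CH, hCH, hHardy⟩ := hHardy
  have hp0 : 0 < p := by linarith
  have hN : 1 < N := by exact_mod_cast hp.trans_le hpN
  have : NeZero N := ⟨by omega⟩
  have hd : 0 ≤ q - 1 - a := by linarith
  rw [pStarInv_eq hp0 hpN] at hsub
  obtain ⟨s, b, hsN, hb, hpb, hexp⟩ :=
    exists_holder_exponents hp0 hpN (by linarith) ha0 hd hsub
  obtain ⟨CS, hCS⟩ := exists_lpNorm_le_sobNorm hΩb hp.le hN hb hpb
  set A := lpNorm r Ω (fun x => K x * bdist Ω x ^ a)
  have hA : 0 ≤ A := ENNReal.toReal_nonneg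
  refine ⟨s, A * CH ^ a * CS ^ (q - 1 - a) + 1, hsN, by positivity, fun u hu => ?_⟩
  have hfac := mul_abs_rpow_add_ae_eq (u := u) hΩo hΩb K ha0 hd
  rw [add_sub_cancel] at hfac
  obtain ⟨hmem, hle⟩ := MemLp.mul_norm_rpow_mul_norm_rpow hKr (hu.memLp_div_bdist_s1 hΩo hΩb _)
    (hu.memLp_s1 _) (by linarith) hp0 hb ha0 hd hexp
  refine ⟨hmem.ae_eq hfac.symm, ?_⟩
  have hS : 0 ≤ sobNorm p Ω u := ENNReal.toReal_nonneg
  calc lpNorm s Ω (fun x => K x * |u x| ^ (q - 1))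
      ≤ A * (lpNorm p Ω (fun x => u x / bdist Ω x) ^ a * lpNorm b Ω u ^ (q - 1 - a)) := by
        rw [_root_.lpNorm, eLpNorm_congr_ae hfac]; exact hle
    _ ≤ A * (CH ^ a * CS ^ (q - 1 - a) * sobNorm p Ω u ^ (a + (q - 1 - a))) :=
        mul_le_mul_of_nonneg_left (rpow_mul_rpow_le_of_le_mul ENNReal.toReal_nonneg
          ENNReal.toReal_nonneg hS hCH.le CS.coe_nonneg ha0 hd (hHardy u hu) (hCS u hu)) hA
    _ ≤ _ := by
        rw [add_sub_cancel, ← mul_assoc, ← mul_assoc]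
        gcongr
        linarith

theorem stmt_1 {N : ℕ} (hN : 2 ≤ N) (Ω : Set (EuclideanSpace ℝ (Fin N)))
    (hΩo : IsOpen Ω) (hΩb : Bornology.IsBounded Ω) (hΩne : Ω.Nonempty)
    (p q a r : ℝ) (hp : 1 < p) (hpN : p ≤ N) (hq1 : 1 ≤ q)
    (hq : p < N → q < N * p / (N - p))
    (ha0 : 0 ≤ a) (ha1 : a ≤ q - 1) (hr : 1 < r)
    (K : EuclideanSpace ℝ (Fin N) → ℝ) (hKmeas : Measurable K)
    (hKr : MemLp (fun x => K x * bdist Ω x ^ a) (ENNReal.ofReal r) (volume.restrict Ω))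
    (hsub : 1 / r + a / p + (q - 1 - a) * pStarInv p N < p / N)
    -- the Hardy inequality, valid since `Ω` has Lipschitz boundary
    (hHardy : ∃ CH > 0, ∀ u, TestFun Ω u →
      lpNorm p Ω (fun x => u x / bdist Ω x) ≤ CH * sobNorm p Ω u) :
    ∃ s C : ℝ, N / p < s ∧ 0 < C ∧
      ∀ u, TestFun Ω u →
        MemLp (fun x => K x * |u x| ^ (q - 1)) (ENNReal.ofReal s) (volume.restrict Ω) ∧
        lpNorm s Ω (fun x => K x * |u x| ^ (q - 1)) ≤ C * sobNorm p Ω u ^ (q - 1) :=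
  stmt_1_general Ω hΩo hΩb p q a r hp hpN ha0 ha1 hr K hKr hsub hHardy
end
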